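/- arXiv:2411.03578 — 2 statements merged into one kernel-verified Lean document; each statement's English description precedes it below -/
import Mathlib

section
/- Let u_L > 0. Then there exists C > 0, depending only on f, I₀ and continuously on |u_L|, such that for any u ∈ I₀ with u ≥ u_L and any v ∈ I₀ with v ≤ φ^♮(u_L) satisfying (f(v) − f(u))/(v − u) = (f(φ^♮(u_L)) − f(u))/(φ^♮(u_L) − u) (i.e., v = φ^♯_{φ^♮(u_L)}(u) is the companion point of u relative to φ^♮(u_L)), one has |v − φ^♮(u_L)| ≤ C·|u − u_L|. -/
open MeasureTheory Set Filter Real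

noncomputable section

/-- Relative entropy `η(a|b) = η(a) − η(b) − η'(b)(a − b)`. -/
def relEnt (η : ℝ → ℝ) (a b : ℝ) : ℝ := η a - η b - deriv η b * (a - b)

/-- Relative entropy flux `q(a;b) = q(a) − q(b) − q'(b)(f(a) − f(b))`. -/
def relFlux (q f : ℝ → ℝ) (a b : ℝ) : ℝ := q a - q b - deriv q b * (f a - f b)

/-- Rankine–Hugoniot speed `σ(u,v) = (f(u) − f(v))/(u − v)`. -/
def shockSpeed (f : ℝ → ℝ) (u v : ℝ) : ℝ := (f u - f v) / (u - v)

/-- Entropy dissipation `E_η(u₋,u₊) = −σ(u₋,u₊)(η(u₊) − η(u₋)) + q(u₊) − q(u₋)`. -/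
def entDiss (η q f : ℝ → ℝ) (um up : ℝ) : ℝ :=
  -(shockSpeed f um up) * (η up - η um) + q up - q um

/-- `f` is a `C⁴` concave-convex flux on `[-M, M]`. -/
def ConcaveConvexFlux (f : ℝ → ℝ) (M : ℝ) : Prop :=
  ContDiffOn ℝ 4 f (Icc (-M) M) ∧
  (∀ u ∈ Icc (-M) M, u ≠ 0 → 0 < u * iteratedDeriv 2 f u) ∧
  iteratedDeriv 2 f 0 = 0 ∧ iteratedDeriv 3 f 0 ≠ 0

/-- `(η, q)` is a `C³` strictly convex entropy pair for the flux `f`. -/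
def EntropyPair (η q f : ℝ → ℝ) : Prop :=
  ContDiff ℝ 3 η ∧ StrictConvexOn ℝ univ η ∧
  ∀ u, deriv q u = deriv η u * deriv f u

/-- The shock `(u_L, u_R)`, `u_R < u_L`, verifies the Oleinik condition. -/
def OleinikCond (f : ℝ → ℝ) (uL uR : ℝ) : Prop :=
  uR < uL ∧ ∀ v, uR < v → v < uL → shockSpeed f uL uR ≤ shockSpeed f uL v

/-- Kružkov entropy `η_k(u) = |u − k|`. -/
def kruzkovEnt (k : ℝ) : ℝ → ℝ := fun u => |u - k|

/-- Kružkov entropy flux `q_k(u) = sgn(u − k)(f(u) − f(k))`. -/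
def kruzkovFlux (f : ℝ → ℝ) (k : ℝ) : ℝ → ℝ := fun u => Real.sign (u - k) * (f u - f k)

/-- Weak solution of `u_t + f(u)_x = 0` on `(0,∞) × ℝ`. -/
def IsWeakSolution (f : ℝ → ℝ) (u : ℝ → ℝ → ℝ) : Prop :=
  ∀ ψ : ℝ × ℝ → ℝ, ContDiff ℝ (⊤ : ℕ∞) ψ → HasCompactSupport ψ →
    tsupport ψ ⊆ Ioi (0:ℝ) ×ˢ (univ : Set ℝ) →
    (∫ t in Ioi (0:ℝ), ∫ x : ℝ,
      (u t x * deriv (fun s => ψ (s, x)) t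
        + f (u t x) * deriv (fun y => ψ (t, y)) x)) = 0

/-- `u` is entropic for the entropy pair `(η, q)`. -/
def IsEntropic (η q : ℝ → ℝ) (u : ℝ → ℝ → ℝ) : Prop :=
  ∀ ψ : ℝ × ℝ → ℝ, ContDiff ℝ (⊤ : ℕ∞) ψ → HasCompactSupport ψ →
    tsupport ψ ⊆ Ioi (0:ℝ) ×ˢ (univ : Set ℝ) → (∀ p, 0 ≤ ψ p) →
    0 ≤ ∫ t in Ioi (0:ℝ), ∫ x : ℝ,
      (η (u t x) * deriv (fun s => ψ (s, x)) t
        + q (u t x) * deriv (fun y => ψ (t, y)) x)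

/-- A Lipschitz curve. -/
def IsLipschitzCurve (h : ℝ → ℝ) : Prop := ∃ K : NNReal, LipschitzWith K h

/-- `um, up` are the strong left/right traces of `u` along the Lipschitz curve `h`. -/
def StrongTraceAt (u : ℝ → ℝ → ℝ) (h : ℝ → ℝ) (um up : ℝ → ℝ) : Prop :=
  (∃ C : ℝ, ∀ t, |um t| ≤ C ∧ |up t| ≤ C) ∧
  ∀ T > (0:ℝ),
    Tendsto (fun n : ℕ => ∫ t in Ioc (0:ℝ) T,
        ⨆ y : (Ioo (0:ℝ) (1 / (n + 1 : ℝ))), |u t (h t + (y : ℝ)) - up t|)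
      atTop (nhds 0) ∧
    Tendsto (fun n : ℕ => ∫ t in Ioc (0:ℝ) T,
        ⨆ y : (Ioo (-(1 / (n + 1 : ℝ))) (0:ℝ)), |u t (h t + (y : ℝ)) - um t|)
      atTop (nhds 0)

/-- The Strong Trace property: strong traces exist along every Lipschitz curve. -/
def HasStrongTraces (u : ℝ → ℝ → ℝ) : Prop :=
  ∀ h : ℝ → ℝ, IsLipschitzCurve h → ∃ um up : ℝ → ℝ, StrongTraceAt u h um up

open Topology in
set_option maxHeartbeats 3200000 in
/-- Lemma 2.5 (Lipschitz bound for the companion function at `u_L`). -/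
theorem companion_lipschitz_bound
    (M : ℝ) (hM : 0 < M) (f : ℝ → ℝ) (hf : ConcaveConvexFlux f M)
    (uL : ℝ) (huL : 0 < uL) (huLmem : uL ∈ Icc (-M) M)
    -- `φn = φ^♮(u_L)`
    (φn : ℝ) (hφnmem : φn ∈ Icc (-M) M) (hφn : φn ≠ uL)
    (hφndef : deriv f φn = shockSpeed f uL φn) :
    ∃ C > (0:ℝ), ∀ u ∈ Icc (-M) M, uL ≤ u →
      ∀ v ∈ Icc (-M) M, v ≤ φn →
        shockSpeed f v u = shockSpeed f φn u →
        |v - φn| ≤ C * |u - uL| := by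
  obtain ⟨hC4, hsign, -, -⟩ := hf
  have hiter : iteratedDeriv 2 f = deriv (deriv f) := by
    rw [show (2:ℕ) = 1 + 1 from rfl, iteratedDeriv_succ, iteratedDeriv_one]
  set d2 := deriv (deriv f) with hd2def
  have hsign' : ∀ x ∈ Icc (-M) M, x ≠ 0 → 0 < x * d2 x := by
    intro x hx hx0; have := hsign x hx hx0; rwa [hiter] at this
  have hit2 : deriv^[2] f = d2 := rfl
  have huLM : uL ≤ M := huLmem.2
  -- trivial case φn = -M
  rcases eq_or_lt_of_le hφnmem.1 with hMeq | hMlt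
  · refine ⟨1, one_pos, ?_⟩
    intro u hu huu v hv hvφ _
    have hveq : v = φn := le_antisymm hvφ (hMeq ▸ hv.1)
    rw [hveq, sub_self, abs_zero]
    positivity
  -- basic smoothness facts on the open interval
  set S := Ioo (-M) M with hSdef
  have hSsub : S ⊆ Icc (-M) M := Ioo_subset_Icc_self
  have hfS : ContDiffOn ℝ 4 f S := hC4.mono hSsub
  have hdfS : DifferentiableOn ℝ f S := hfS.differentiableOn (by norm_num)
  have hf'S : ContDiffOn ℝ 3 (deriv f) S :=
    hfS.deriv_of_isOpen isOpen_Ioo (by norm_num)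
  have hdf'S : DifferentiableOn ℝ (deriv f) S := hf'S.differentiableOn (by norm_num)
  have hd2cont : ContinuousOn d2 S :=
    hf'S.continuousOn_deriv_of_isOpen isOpen_Ioo (by norm_num)
  have hdfAt : ∀ x ∈ S, DifferentiableAt ℝ f x := fun x hx =>
    (hdfS x hx).differentiableAt (isOpen_Ioo.mem_nhds hx)
  have hdf'At : ∀ x ∈ S, DifferentiableAt ℝ (deriv f) x := fun x hx =>
    (hdf'S x hx).differentiableAt (isOpen_Ioo.mem_nhds hx)
  -- strict convexity on [0, M]
  have hconv : StrictConvexOn ℝ (Icc 0 M) f := by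
    apply strictConvexOn_of_deriv2_pos (convex_Icc 0 M)
      (hC4.continuousOn.mono (Icc_subset_Icc (by linarith) le_rfl))
    intro x hx
    rw [interior_Icc] at hx
    have hxI : x ∈ Icc (-M) M := ⟨by linarith [hx.1], hx.2.le⟩
    have h1 := hsign' x hxI (ne_of_gt hx.1)
    rw [hit2]
    nlinarith [hx.1]
  -- strict concavity on [-M, 0]
  have hconc : StrictConcaveOn ℝ (Icc (-M) 0) f := by
    apply strictConcaveOn_of_deriv2_neg (convex_Icc (-M) 0)
      (hC4.continuousOn.mono (Icc_subset_Icc le_rfl (by linarith)))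
    intro x hx
    rw [interior_Icc] at hx
    have hxI : x ∈ Icc (-M) M := ⟨hx.1.le, by linarith [hx.2]⟩
    have h1 := hsign' x hxI (ne_of_lt hx.2)
    rw [hit2]
    nlinarith [hx.2]
  -- φn < 0
  have hssuL : shockSpeed f uL φn = (f uL - f φn) / (uL - φn) := rfl
  have hφneg : φn < 0 := by
    by_contra hcon
    push_neg at hcon
    have hφM : φn ≤ M := hφnmem.2
    rcases lt_or_gt_of_ne hφn with hlt | hgt
    · -- 0 ≤ φn < uL
      have hφS : φn ∈ S := ⟨by linarith, by linarith⟩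
      have h1 := hconv.deriv_lt_slope ⟨hcon, hφM⟩ ⟨huL.le, huLM⟩ hlt (hdfAt φn hφS)
      rw [slope_def_field] at h1
      rw [hφndef, hssuL] at h1
      exact lt_irrefl _ h1
    · -- uL < φn
      rcases eq_or_lt_of_le hφM with hMeq2 | hφMlt
      · -- φn = M
        have hMS : 0 < M * d2 M := by
          have := hsign' M ⟨by linarith, le_rfl⟩ (ne_of_gt hM)
          exact this
        have hd2Mpos : 0 < d2 M := by nlinarith
        have hdiffd : DifferentiableAt ℝ (deriv f) M :=
          differentiableAt_of_deriv_ne_zero (ne_of_gt hd2Mpos)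
        have hcontM : ContinuousAt (deriv f) M := hdiffd.continuousAt
        set x₀ := (uL + M) / 2 with hx₀def
        have huLMlt : uL < M := by rw [hMeq2] at hgt; exact hgt
        have hx₀1 : uL < x₀ := by rw [hx₀def]; linarith
        have hx₀2 : x₀ < M := by rw [hx₀def]; linarith
        have hx₀pos : 0 < x₀ := by linarith
        set l := 𝓝[Ioo x₀ M] M with hldef
        have hlne : l.NeBot := by
          rw [hldef]
          apply mem_closure_iff_nhdsWithin_neBot.mp
          rw [closure_Ioo (ne_of_lt hx₀2)]
          exact ⟨hx₀2.le, le_rfl⟩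
        have htd : Tendsto (deriv f) l (𝓝 (deriv f M)) :=
          hcontM.tendsto.mono_left nhdsWithin_le_nhds
        have hfM : ContinuousWithinAt f (Icc (-M) M) M :=
          hC4.continuousOn M ⟨by linarith, le_rfl⟩
        have hlle : l ≤ 𝓝[Icc (-M) M] M := by
          rw [hldef]
          exact nhdsWithin_mono M (fun y hy => ⟨by linarith [hy.1], hy.2.le⟩)
        have hfl : Tendsto f l (𝓝 (f M)) := hfM.tendsto.mono_left hlle
        have hidl : Tendsto (fun y : ℝ => y) l (𝓝 M) := tendsto_id.mono_right nhdsWithin_le_nhds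
        have hts : Tendsto (fun y => (f y - f x₀) / (y - x₀)) l
            (𝓝 ((f M - f x₀) / (M - x₀))) := by
          apply Tendsto.div (hfl.sub tendsto_const_nhds) (hidl.sub tendsto_const_nhds)
          exact ne_of_gt (by linarith)
        have hcomp : ∀ᶠ y in l, (f y - f x₀) / (y - x₀) ≤ deriv f y := by
          filter_upwards [self_mem_nhdsWithin] with y hy
          have hyS : y ∈ S := ⟨by linarith [hy.1], hy.2⟩
          have := hconv.slope_lt_deriv ⟨hx₀pos.le, hx₀2.le⟩ ⟨by linarith [hy.1], hy.2.le⟩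
            hy.1 (hdfAt y hyS)
          rw [slope_def_field] at this
          exact this.le
        have hle : (f M - f x₀) / (M - x₀) ≤ deriv f M :=
          le_of_tendsto_of_tendsto hts htd hcomp
        have hstrict : (f uL - f M) / (uL - M) < (f x₀ - f M) / (x₀ - M) :=
          hconv.secant_strict_mono ⟨hM.le, le_rfl⟩ ⟨huL.le, huLM⟩
            ⟨hx₀pos.le, hx₀2.le⟩ (ne_of_lt huLMlt) (ne_of_lt hx₀2) hx₀1
        have heq2 : (f x₀ - f M) / (x₀ - M) = (f M - f x₀) / (M - x₀) := by
          rw [← neg_div_neg_eq]; ring_nf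
        have hder : deriv f M = (f uL - f M) / (uL - M) := by
          rw [← hMeq2] at *
          rw [hφndef, hssuL, hMeq2]
        rw [heq2] at hstrict
        rw [hder] at hle
        linarith
      · -- uL < φn < M
        have hφS : φn ∈ S := ⟨by linarith, hφMlt⟩
        have h1 := hconv.slope_lt_deriv ⟨huL.le, huLM⟩ ⟨hcon, hφM⟩ hgt (hdfAt φn hφS)
        rw [slope_def_field] at h1
        have : (f φn - f uL) / (φn - uL) = (f uL - f φn) / (uL - φn) := by
          rw [← neg_div_neg_eq]; ring_nf
        rw [this, ← hssuL, ← hφndef] at h1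
        exact lt_irrefl _ h1
  -- now the main case : -M < φn < 0
  have hφS : φn ∈ S := ⟨hMlt, by linarith⟩
  have hd2φ : d2 φn < 0 := by
    have := hsign' φn hφnmem (ne_of_lt hφneg)
    nlinarith
  set ε := -(d2 φn) / 2 with hεdef
  have hεpos : 0 < ε := by rw [hεdef]; linarith
  -- find δ
  have hc2 : ContinuousAt d2 φn := (hd2cont φn hφS).continuousAt (isOpen_Ioo.mem_nhds hφS)
  have hnhds : d2 ⁻¹' (Iio (-ε)) ∈ 𝓝 φn := by
    apply hc2.preimage_mem_nhds
    apply Iio_mem_nhds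
    rw [hεdef]; linarith
  obtain ⟨δ₁, hδ₁pos, hδ₁⟩ := Metric.mem_nhds_iff.mp hnhds
  set δ := min (δ₁ / 2) ((φn + M) / 2) with hδdef
  have hδpos : 0 < δ := by
    rw [hδdef]
    apply lt_min (by linarith) (by linarith)
  have hδle1 : δ ≤ δ₁ / 2 := min_le_left _ _
  have hδle2 : δ ≤ (φn + M) / 2 := min_le_right _ _
  have hJsub : Icc (φn - δ) φn ⊆ S := by
    intro x hx
    constructor
    · have := hx.1; linarith
    · have := hx.2; linarith
  have hJd2 : ∀ x ∈ Icc (φn - δ) φn, d2 x < -ε := by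
    intro x hx
    apply hδ₁
    have h1 := hx.1; have h2 := hx.2
    have : dist x φn < δ₁ := by
      rw [Real.dist_eq, abs_lt]; constructor <;> linarith
    exact this
  -- lower bound on deriv f on [φn-δ, φn]
  have hf'lb : ∀ x ∈ Icc (φn - δ) φn, deriv f φn + ε * (φn - x) ≤ deriv f x := by
    intro x hx
    rcases eq_or_lt_of_le hx.2 with heq | hlt
    · rw [heq]; simp
    · have hsubS : Icc x φn ⊆ S := by
        intro y hy
        exact hJsub ⟨by linarith [hx.1, hy.1], hy.2⟩
      obtain ⟨ξ, hξmem, hξeq⟩ := exists_deriv_eq_slope (deriv f) hlt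
        (hf'S.continuousOn.mono hsubS)
        (hdf'S.mono (fun y hy => hsubS ⟨hy.1.le, hy.2.le⟩))
      have hξJ : ξ ∈ Icc (φn - δ) φn := ⟨by linarith [hx.1, hξmem.1], hξmem.2.le⟩
      have hd2ξ := hJd2 ξ hξJ
      have hdiff : deriv f φn - deriv f x = d2 ξ * (φn - x) := by
        have h := hξeq
        rw [← hd2def, eq_div_iff (ne_of_gt (sub_pos.mpr hlt))] at h
        exact h.symm
      nlinarith [sub_pos.mpr hlt]
  -- quadratic decay of f below its tangent at φn
  have hG : ∀ v ∈ Icc (φn - δ) φn,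
      f v - f φn - deriv f φn * (v - φn) ≤ -(ε/2) * (φn - v)^2 := by
    intro v hv
    set G : ℝ → ℝ := fun x => f x - deriv f φn * x + (ε/2) * (x - φn)^2 with hGdef
    have hGd : ∀ x ∈ S, HasDerivAt G (deriv f x - deriv f φn + ε * (x - φn)) x := by
      intro x hx
      have h1 : HasDerivAt f (deriv f x) x := (hdfAt x hx).hasDerivAt
      have h2 : HasDerivAt (fun y : ℝ => deriv f φn * y) (deriv f φn) x := by
        simpa using (hasDerivAt_id x).const_mul (deriv f φn)
      have h3 : HasDerivAt (fun y : ℝ => (ε/2) * (y - φn)^2) (ε * (x - φn)) x := by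
        have hb : HasDerivAt (fun y : ℝ => (y - φn)^2) (2 * (x - φn)) x := by
          simpa using ((hasDerivAt_id x).sub_const φn).fun_pow 2
        have := hb.const_mul (ε/2)
        rw [show ε * (x - φn) = ε / 2 * (2 * (x - φn)) by ring]
        exact this
      exact (h1.sub h2).add h3
    have hmono : MonotoneOn G (Icc (φn - δ) φn) := by
      apply monotoneOn_of_deriv_nonneg (convex_Icc _ _)
      · exact fun x hx => ((hGd x (hJsub hx)).continuousAt).continuousWithinAt
      · intro x hx
        rw [interior_Icc] at hx
        exact ((hGd x (hJsub ⟨hx.1.le, hx.2.le⟩)).differentiableAt).differentiableWithinAt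
      · intro x hx
        rw [interior_Icc] at hx
        have hxJ : x ∈ Icc (φn - δ) φn := ⟨hx.1.le, hx.2.le⟩
        rw [(hGd x (hJsub hxJ)).deriv]
        have := hf'lb x hxJ
        nlinarith
    have hle := hmono hv ⟨by linarith [hδpos], le_rfl⟩ hv.2
    rw [hGdef] at hle
    simp only at hle
    have hsq : (φn - v)^2 = (v - φn)^2 := by ring
    rw [hsq]
    nlinarith [hle]
  -- lower bound for the secant slope near φn
  have hlow1 : ∀ v ∈ Icc (φn - δ) φn, v < φn →
      deriv f φn + (ε/2) * (φn - v) ≤ (f v - f φn) / (v - φn) := by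
    intro v hv hvlt
    rw [le_div_iff_of_neg (by linarith : v - φn < 0)]
    have := hG v hv
    nlinarith [sq_nonneg (φn - v)]
  set c := min (ε/2) (ε * δ / (8 * M)) with hcdef
  have hcpos : 0 < c := by
    rw [hcdef]
    apply lt_min (by linarith)
    have : 0 < ε * δ := mul_pos hεpos hδpos
    positivity
  have hcle1 : c ≤ ε/2 := min_le_left _ _
  have hcle2 : c ≤ ε * δ / (8 * M) := min_le_right _ _
  -- global lower bound for the secant slope on [-M, φn)
  have hlow : ∀ v ∈ Icc (-M) M, v < φn →
      deriv f φn + c * (φn - v) ≤ (f v - f φn) / (v - φn) := by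
    intro v hv hvlt
    by_cases hcase : φn - δ ≤ v
    · have h1 := hlow1 v ⟨hcase, hvlt.le⟩ hvlt
      have h2 : c * (φn - v) ≤ (ε/2) * (φn - v) :=
        mul_le_mul_of_nonneg_right hcle1 (by linarith)
      linarith
    · push_neg at hcase
      set w := φn - δ with hwdef
      have hwI : w ∈ Icc (-M) 0 := ⟨by
        have := hJsub (⟨le_rfl, by linarith⟩ : w ∈ Icc (φn - δ) φn); exact this.1.le,
        by rw [hwdef]; linarith⟩
      have hw1 := hlow1 w ⟨le_rfl, by linarith⟩ (by rw [hwdef]; linarith)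
      have hwslope : deriv f φn + (ε/2) * δ ≤ (f w - f φn) / (w - φn) := by
        have : φn - w = δ := by rw [hwdef]; ring
        rw [this] at hw1
        exact hw1
      have hsec := hconc.secant_strict_mono (a := φn) ⟨hMlt.le, hφneg.le⟩
        ⟨hv.1, by linarith⟩ hwI (ne_of_lt hvlt) (by rw [hwdef]; intro h; nlinarith) hcase
      -- hsec : (f w - f φn) / (w - φn) < (f v - f φn) / (v - φn)
      have hbound : c * (φn - v) ≤ (ε/2) * δ := by
        have h1 : c * (φn - v) ≤ c * (2 * M) :=
          mul_le_mul_of_nonneg_left (by linarith [hv.1]) hcpos.le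
        have h2 : c * (2 * M) ≤ (ε * δ / (8 * M)) * (2 * M) :=
          mul_le_mul_of_nonneg_right hcle2 (by linarith)
        have h3 : (ε * δ / (8 * M)) * (2 * M) = ε * δ / 4 := by
          field_simp
          ring
        have h4 : ε * δ / 4 ≤ (ε/2) * δ := by nlinarith
        linarith
      linarith
  -- Lipschitz bound for f on [-M, M]
  have hMM : -M < M := by linarith
  obtain ⟨K₀, hK₀⟩ := (isCompact_Icc (a := -M) (b := M)).exists_bound_of_continuousOn
    (hC4.continuousOn_derivWithin (uniqueDiffOn_Icc hMM) (by norm_num))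
  set K := max K₀ 1 with hKdef
  have hKpos : 0 < K := lt_of_lt_of_le one_pos (le_max_right _ _)
  have hlipf : ∀ x ∈ Icc (-M) M, ∀ y ∈ Icc (-M) M, |f y - f x| ≤ K * |y - x| := by
    intro x hx y hy
    have := Convex.norm_image_sub_le_of_norm_derivWithin_le (C := K)
      (hC4.differentiableOn (by norm_num))
      (fun z hz => (hK₀ z hz).trans (le_max_left _ _)) (convex_Icc _ _) hx hy
    simpa [Real.norm_eq_abs] using this
  set d := uL - φn with hddef
  have hdpos : 0 < d := by rw [hddef]; linarith
  set L := 2 * K / d with hLdef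
  have hLpos : 0 < L := by rw [hLdef]; positivity
  -- upper bound for the slope increment
  have hup : ∀ u ∈ Icc (-M) M, uL ≤ u →
      (f u - f φn) / (u - φn) - (f uL - f φn) / (uL - φn) ≤ L * (u - uL) := by
    intro u hu huu
    have huφ : 0 < u - φn := by linarith
    have hne1 : u - φn ≠ 0 := ne_of_gt huφ
    have hne2 : uL - φn ≠ 0 := by rw [← hddef]; exact ne_of_gt hdpos
    have hA : f u - f uL ≤ K * (u - uL) := by
      have := hlipf uL huLmem u hu
      rw [abs_of_nonneg (by linarith : (0:ℝ) ≤ u - uL)] at this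
      exact (le_abs_self _).trans this
    have hB : -(K * (uL - φn)) ≤ f uL - f φn := by
      have := hlipf φn hφnmem uL huLmem
      rw [abs_of_nonneg (by linarith : (0:ℝ) ≤ uL - φn)] at this
      linarith [neg_abs_le (f uL - f φn)]
    rw [div_sub_div _ _ hne1 hne2, div_le_iff₀ (by nlinarith : (0:ℝ) < (u - φn) * (uL - φn))]
    have hLhs : L * (u - uL) * ((u - φn) * (uL - φn)) = 2 * K * (u - uL) * (u - φn) := by
      rw [hLdef, hddef]
      field_simp
    rw [hLhs]
    have e1 : (f u - f uL) * (uL - φn) ≤ K * (u - uL) * (uL - φn) :=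
      mul_le_mul_of_nonneg_right hA (by linarith)
    have e2 : -((f uL - f φn) * (u - uL)) ≤ K * (uL - φn) * (u - uL) := by
      have := mul_le_mul_of_nonneg_right hB (by linarith : (0:ℝ) ≤ u - uL)
      nlinarith
    have e3 : 2 * K * (u - uL) * (uL - φn) ≤ 2 * K * (u - uL) * (u - φn) :=
      mul_le_mul_of_nonneg_left (by linarith) (by nlinarith)
    nlinarith
  -- final assembly
  refine ⟨L / c, by positivity, ?_⟩
  intro u hu huu v hv hvφ heq
  rcases eq_or_lt_of_le hvφ with hveq | hvlt
  · rw [hveq, sub_self, abs_zero]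
    positivity
  · have huφpos : 0 < u - φn := by linarith
    have huvpos : 0 < u - v := by linarith
    have hslope : (f v - f φn) / (v - φn) = (f u - f φn) / (u - φn) := by
      have h1 : (f v - f u) * (φn - u) = (f φn - f u) * (v - u) :=
        (div_eq_div_iff (by intro h; nlinarith : v - u ≠ 0)
          (by intro h; nlinarith : φn - u ≠ 0)).mp heq
      rw [div_eq_div_iff (by intro h; nlinarith : v - φn ≠ 0)
          (by intro h; nlinarith : u - φn ≠ 0)]
      linear_combination -h1
    have hlo := hlow v hv hvlt
    have hup' := hup u hu huu
    rw [hslope] at hlo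
    rw [hφndef, hssuL] at hlo
    have hkey : c * (φn - v) ≤ L * (u - uL) := by linarith
    rw [abs_of_neg (by linarith : v - φn < 0), abs_of_nonneg (by linarith : (0:ℝ) ≤ u - uL)]
    rw [div_mul_eq_mul_div, le_div_iff₀ hcpos]
    nlinarith

end
end

section
/- Let f be concave-convex, let (u_-, u_+) be a shock with u_- > 0 and u_+ < u_-, and let k ≤ φ^♮(u_-). Then (u_-, u_+) is η_k-entropic (i.e., E_{η_k}(u_-, u_+) ≤ 0) if and only if u_+ ≥ k. -/
open MeasureTheory Set Filter Real

noncomputable section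

set_option maxHeartbeats 1000000 in
/-- Lemma 2.6 (Kružkov entropy condition, case `k ≤ φ^♮(u₋)`). -/
theorem kruzkov_entropic_iff_below_tangent
    (M : ℝ) (hM : 0 < M) (f : ℝ → ℝ) (hf : ConcaveConvexFlux f M)
    (um up : ℝ) (humem : um ∈ Icc (-M) M) (hupmem : up ∈ Icc (-M) M)
    (hum : 0 < um) (hshock : up < um)
    -- `φm = φ^♮(u₋)`
    (φm : ℝ) (hφmem : φm ∈ Icc (-M) M) (hφ : φm ≠ um)
    (hφdef : deriv f φm = shockSpeed f um φm)
    (k : ℝ) (hk : k ≤ φm) :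
    entDiss (kruzkovEnt k) (kruzkovFlux f k) f um up ≤ 0 ↔ k ≤ up := by
  obtain ⟨hsmooth, hsign, h20, h30⟩ := hf
  have hcontf : ContinuousOn f (Icc (-M) M) := hsmooth.continuousOn
  have hd1 : (0:ℝ) < um - up := sub_pos.2 hshock
  have hit2 : iteratedDeriv 2 f = deriv (deriv f) := by
    rw [iteratedDeriv_succ, iteratedDeriv_one]
  have hdiffAt : ∀ x ∈ Ioo (-M) M, DifferentiableAt ℝ f x := by
    intro x hx
    have h4 : ContDiffAt ℝ 4 f x := hsmooth.contDiffAt (Icc_mem_nhds hx.1 hx.2)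
    exact h4.differentiableAt (by norm_num)
  have hconv : StrictConvexOn ℝ (Icc 0 M) f := by
    apply strictConvexOn_of_deriv2_pos (convex_Icc _ _)
      (hcontf.mono (Icc_subset_Icc (by linarith) le_rfl))
    intro x hx
    rw [interior_Icc] at hx
    have h2 := hsign x ⟨by linarith [hx.1], hx.2.le⟩ (ne_of_gt hx.1)
    have hx' : deriv^[2] f x = iteratedDeriv 2 f x := by
      rw [hit2]; simp [Function.iterate_succ, Function.iterate_one]
    rw [hx']
    by_contra hle
    push_neg at hle
    nlinarith [mul_nonpos_of_nonneg_of_nonpos hx.1.le hle]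
  have hss : ∀ x : ℝ, shockSpeed f um x = slope f x um := by
    intro x
    rw [slope_def_field, shockSpeed]
  constructor
  · -- hard direction
    intro hE
    by_contra hku
    push_neg at hku
    -- hku : up < k
    -- first: φm < 0
    have hφneg : φm < 0 := by
      by_contra hφ0
      push_neg at hφ0
      rcases lt_or_gt_of_ne hφ with hlt | hgt
      · -- φm < um
        have hdφ : DifferentiableAt ℝ f φm :=
          hdiffAt φm ⟨by linarith, by linarith [humem.2]⟩
        have := hconv.deriv_lt_slope ⟨hφ0, hφmem.2⟩ ⟨hum.le, humem.2⟩ hlt hdφ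
        rw [hφdef, hss, slope_comm] at this
        exact lt_irrefl _ this
      · -- um < φm
        rcases eq_or_lt_of_le hφmem.2 with hMeq | hφM
        · -- φm = M : boundary case
          subst hMeq
          have humM : um < φm := hgt
          set w : ℝ := (um + φm)/2 with hw
          have hw1 : um < w := by simp only [hw]; linarith
          have hw2 : w < φm := by simp only [hw]; linarith
          haveI hnb : Filter.NeBot (nhdsWithin φm (Ioo w φm)) := right_nhdsWithin_Ioo_neBot hw2
          have hsub : Ioo w φm ⊆ Icc (-φm) φm := fun x hx =>
            ⟨by have := hx.1; simp only [hw] at this; linarith, hx.2.le⟩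
          have hctsf : Tendsto f (nhdsWithin φm (Ioo w φm)) (nhds (f φm)) :=
            ((hcontf φm ⟨by linarith, le_rfl⟩).mono hsub)
          have hdd : DifferentiableAt ℝ (deriv f) φm := by
            by_contra hnd
            have h0 := deriv_zero_of_not_differentiableAt hnd
            have h2 := hsign φm ⟨by linarith, le_rfl⟩ (by linarith)
            rw [hit2] at h2
            rw [h0] at h2
            simp at h2
          have hctsd : Tendsto (deriv f) (nhdsWithin φm (Ioo w φm)) (nhds (deriv f φm)) :=
            (hdd.continuousAt.tendsto).mono_left nhdsWithin_le_nhds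
          have hslope : Tendsto (fun x => (f x - f w)/(x - w)) (nhdsWithin φm (Ioo w φm))
              (nhds ((f φm - f w)/(φm - w))) := by
            apply Tendsto.div (hctsf.sub tendsto_const_nhds)
            · exact (((continuous_id.sub continuous_const).tendsto φm).mono_left
                nhdsWithin_le_nhds)
            · exact sub_ne_zero.2 (ne_of_gt hw2)
          have hev : ∀ᶠ x in nhdsWithin φm (Ioo w φm), (f x - f w)/(x - w) ≤ deriv f x := by
            filter_upwards [eventually_mem_nhdsWithin] with x hx
            have hdx : DifferentiableAt ℝ f x :=
              hdiffAt x ⟨by have := hx.1; simp only [hw] at this; linarith, hx.2⟩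
            have := hconv.convexOn.slope_le_deriv
              ⟨by simp only [hw]; linarith, by simp only [hw]; linarith⟩
              ⟨by linarith [hx.1, hw1], hx.2.le⟩ hx.1 hdx
            rw [slope_def_field] at this
            exact this
          have hle : (f φm - f w)/(φm - w) ≤ deriv f φm :=
            le_of_tendsto_of_tendsto hslope hctsd hev
          have hstrict : (f um - f φm)/(um - φm) < (f w - f φm)/(w - φm) :=
            hconv.secant_strict_mono ⟨by linarith, le_rfl⟩
              ⟨hum.le, humM.le⟩ ⟨by simp only [hw]; linarith, hw2.le⟩
              (ne_of_lt humM) (ne_of_lt hw2) hw1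
          have he1 : (f w - f φm)/(w - φm) = (f φm - f w)/(φm - w) := by
            rw [← neg_div_neg_eq]; ring_nf
          rw [hφdef] at hle
          rw [he1] at hstrict
          have : shockSpeed f um φm = (f um - f φm)/(um - φm) := rfl
          rw [this] at hle
          linarith
        · -- um < φm < M
          have hdφ : DifferentiableAt ℝ f φm := hdiffAt φm ⟨by linarith, hφM⟩
          have := hconv.slope_lt_deriv ⟨hum.le, humem.2⟩ ⟨by linarith, hφmem.2⟩
            hgt hdφ
          rw [hφdef, hss] at this
          rw [slope_comm] at this
          exact lt_irrefl _ this
    -- Now φm < 0.  Bounds.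
    have hupM : -M ≤ up := hupmem.1
    have hd2 : (0:ℝ) < φm - up := by linarith
    have hd3 : (0:ℝ) < um - φm := by linarith
    have hkup : (0:ℝ) < k - up := by linarith
    have hkum : k < um := by linarith
    have hφint : φm ∈ Ioo (-M) M := ⟨by linarith, by linarith⟩
    have hdφ : DifferentiableAt ℝ f φm := hdiffAt φm hφint
    have hconc : StrictConcaveOn ℝ (Icc (-M) 0) f := by
      apply strictConcaveOn_of_deriv2_neg (convex_Icc _ _)
        (hcontf.mono (Icc_subset_Icc le_rfl (by linarith)))
      intro x hx
      rw [interior_Icc] at hx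
      have h2 := hsign x ⟨hx.1.le, by linarith [hx.2]⟩ (ne_of_lt hx.2)
      have hx' : deriv^[2] f x = iteratedDeriv 2 f x := by
        rw [hit2]; simp [Function.iterate_succ, Function.iterate_one]
      rw [hx']
      by_contra hle
      push_neg at hle
      nlinarith [mul_nonpos_of_nonpos_of_nonneg hx.2.le hle]
    have hupmem' : up ∈ Icc (-M) (0:ℝ) := ⟨hupM, by linarith⟩
    have hφmem' : φm ∈ Icc (-M) (0:ℝ) := ⟨by linarith, hφneg.le⟩
    have hkmem' : k ∈ Icc (-M) (0:ℝ) := ⟨by linarith, by linarith⟩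
    set s : ℝ := deriv f φm with hsdef
    have hfum : f um = f φm + s * (um - φm) := by
      have : s = (f um - f φm)/(um - φm) := hφdef
      field_simp [ne_of_gt hd3] at this
      linarith [this]
    -- tangent line inequality
    have htan : f up < f φm + s * (up - φm) := by
      have h := hconc.deriv_lt_slope hupmem' hφmem' (by linarith) hdφ
      rw [slope_def_field] at h
      -- h : s < (f φm - f up)/(φm - up)
      have := (lt_div_iff₀ hd2).1 h
      nlinarith [this]
    -- chord inequality from concavity
    have h1' : (φm - k) * f up + (k - up) * f φm ≤ f k * (φm - up) := by
      have ha : (0:ℝ) ≤ (φm - k)/(φm - up) := div_nonneg (by linarith) hd2.le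
      have hb : (0:ℝ) ≤ (k - up)/(φm - up) := div_nonneg hkup.le hd2.le
      have hab : (φm - k)/(φm - up) + (k - up)/(φm - up) = 1 := by
        field_simp
        ring
      have hcomb := hconc.concaveOn.2 hupmem' hφmem' ha hb hab
      simp only [smul_eq_mul] at hcomb
      have hpt : (φm - k)/(φm - up) * up + (k - up)/(φm - up) * φm = k := by
        field_simp; ring
      rw [hpt] at hcomb
      rw [div_mul_eq_mul_div, div_mul_eq_mul_div, ← add_div,
        div_le_iff₀ hd2] at hcomb
      nlinarith [hcomb]
    -- main positivity
    have hG : 0 < f k * (um - up) - f um * (um - up) - (f um - f up) * (k - um) := by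
      have key : (φm - up) * (f k * (um - up) - f um * (um - up)
            - (f um - f up) * (k - um))
          = (um - up) * (f k * (φm - up) - ((φm - k) * f up + (k - up) * f φm))
            + (f um - s * (um - up) - f up) * ((k - up) * (um - φm)) := by
        rw [hfum]; ring
      have t1 : 0 ≤ (um - up) * (f k * (φm - up) - ((φm - k) * f up + (k - up) * f φm)) :=
        mul_nonneg hd1.le (by linarith)
      have t2 : 0 < (f um - s * (um - up) - f up) * ((k - up) * (um - φm)) := by
        apply mul_pos _ (mul_pos hkup hd3)
        rw [hfum]; nlinarith [htan]
      have hpos : 0 < (φm - up) * (f k * (um - up) - f um * (um - up)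
          - (f um - f up) * (k - um)) := by rw [key]; linarith
      nlinarith [hpos, hd2]
    -- conclude
    have hEeq : entDiss (kruzkovEnt k) (kruzkovFlux f k) f um up
        = (2 * (f k * (um - up) - f um * (um - up) - (f um - f up) * (k - um)))
          / (um - up) := by
      simp only [entDiss, kruzkovEnt, kruzkovFlux, shockSpeed]
      rw [abs_of_neg (by linarith : up - k < 0), abs_of_pos (by linarith : (0:ℝ) < um - k),
        Real.sign_of_neg (by linarith : up - k < 0),
        Real.sign_of_pos (by linarith : (0:ℝ) < um - k)]
      field_simp
      ring
    rw [hEeq] at hE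
    have : 0 < (2 * (f k * (um - up) - f um * (um - up) - (f um - f up) * (k - um)))
        / (um - up) := div_pos (by linarith) hd1
    linarith
  · -- easy direction : k ≤ up implies dissipation = 0
    intro hkup
    have hkum : k < um := lt_of_le_of_lt hkup hshock
    rcases eq_or_lt_of_le hkup with heq | hlt
    · subst heq
      have hEeq : entDiss (kruzkovEnt k) (kruzkovFlux f k) f um k = 0 := by
        simp only [entDiss, kruzkovEnt, kruzkovFlux, shockSpeed]
        rw [sub_self, abs_zero, Real.sign_zero,
          abs_of_pos (by linarith : (0:ℝ) < um - k),
          Real.sign_of_pos (by linarith : (0:ℝ) < um - k)]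
        field_simp
        ring
      rw [hEeq]
    · have hEeq : entDiss (kruzkovEnt k) (kruzkovFlux f k) f um up = 0 := by
        simp only [entDiss, kruzkovEnt, kruzkovFlux, shockSpeed]
        rw [abs_of_pos (by linarith : (0:ℝ) < up - k),
          abs_of_pos (by linarith : (0:ℝ) < um - k),
          Real.sign_of_pos (by linarith : (0:ℝ) < up - k),
          Real.sign_of_pos (by linarith : (0:ℝ) < um - k)]
        field_simp
        ring
      rw [hEeq]


end
end
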